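/- arXiv:1301.4613 — 8 statements merged into one kernel-verified Lean document; each statement's English description precedes it below -/
import Mathlib

section
/- Let r1, r2 be cubic polynomials over ℂ with no common roots (including at infinity, i.e. their resultant as cubics is nonzero). Define h(x,y) = (r1(x)r2(y) - r2(x)r1(y))/(x-y), which is a symmetric biquadratic polynomial. Then res₂[h(x,y), h(y,z), y] = (x-z)² · μ · h(x,z), where μ = res₃[r1, r2] is the resultant of r1 and r2 and res₂ denotes the resultant of the two expressions regarded as degree-two polynomials in y. -/
/-!
Both sides are polynomials in `x`, `z` and the eight coefficients, so it suffices to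
make them explicit. Comparing coefficients in `y` writes each `Aᵢ(w)` as
`r2(w)αᵢ(w) - r1(w)βᵢ(w)`, where `αᵢ, βᵢ` are the coefficients of the divided
differences of `r1, r2`; the Sylvester determinant of two quadratics `(p, q, r)` and
`(s, t, u)` is `(pu - rs)² - (pt - qs)(qu - rt)`; and the resultant of two cubics is
minus the determinant of their Bézout matrix. What remains is an identity of
polynomials.
-/

namespace Stmt0

/-- Divided difference `(r(x)-r(y))/(x-y)` of the cubic
`r(t) = a₃t³+a₂t²+a₁t+a₀`, in polynomial form. -/
def cubicDD (a₀ a₁ a₂ a₃ x y : ℂ) : ℂ :=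
  a₃*(x^2 + x*y + y^2) + a₂*(x + y) + a₁

section Sylvester

variable {R : Type*} [CommRing R]

theorem det_sylvester_quadratic (p q r s t u : R) :
    !![p, q, r, 0; 0, p, q, r; s, t, u, 0; 0, s, t, u].det
      = (p*u - r*s)^2 - (p*t - q*s)*(q*u - r*t) := by
  simp [Matrix.det_succ_row_zero, Fin.sum_univ_succ]
  simp +decide [Fin.succAbove]
  ring

/-- The Bézout matrix `B` of `f = ∑ aᵢtⁱ` and `g = ∑ bᵢtⁱ`, characterised by
`(f(x)g(y) - g(x)f(y))/(x - y) = ∑ Bᵢⱼ xⁱ yʲ`. -/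
def cubicBezoutMatrix (a₀ a₁ a₂ a₃ b₀ b₁ b₂ b₃ : R) : Matrix (Fin 3) (Fin 3) R :=
  !![a₁*b₀ - a₀*b₁, a₂*b₀ - a₀*b₂, a₃*b₀ - a₀*b₃;
     a₂*b₀ - a₀*b₂, a₃*b₀ - a₀*b₃ + a₂*b₁ - a₁*b₂, a₃*b₁ - a₁*b₃;
     a₃*b₀ - a₀*b₃, a₃*b₁ - a₁*b₃, a₃*b₂ - a₂*b₃]

theorem det_sylvester_cubic (a₀ a₁ a₂ a₃ b₀ b₁ b₂ b₃ : R) :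
    !![a₃, a₂, a₁, a₀, 0, 0;
       0, a₃, a₂, a₁, a₀, 0;
       0, 0, a₃, a₂, a₁, a₀;
       b₃, b₂, b₁, b₀, 0, 0;
       0, b₃, b₂, b₁, b₀, 0;
       0, 0, b₃, b₂, b₁, b₀].det
      = -(cubicBezoutMatrix a₀ a₁ a₂ a₃ b₀ b₁ b₂ b₃).det := by
  simp [cubicBezoutMatrix, Matrix.det_succ_row_zero, Fin.sum_univ_succ]
  simp +decide [Fin.succAbove]
  ring

end Sylvester

theorem quadratic_coeffs_eq_of_forall_eq {R : Type*} [CommRing R] [NoZeroDivisors R]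
    (h2 : (2 : R) ≠ 0) {a b c a' b' c' : R}
    (h : ∀ y, a*y^2 + b*y + c = a'*y^2 + b'*y + c') :
    a = a' ∧ b = b' ∧ c = c' := by
  refine ⟨mul_left_cancel₀ h2 ?_, mul_left_cancel₀ h2 ?_, by linear_combination h 0⟩
  · linear_combination h 1 + h (-1) - 2 * h 0
  · linear_combination h 1 - h (-1)

theorem cubicDD_eq_quadratic (a₀ a₁ a₂ a₃ x y : ℂ) :
    cubicDD a₀ a₁ a₂ a₃ x y = a₃ * y^2 + (a₃*x + a₂) * y + (a₃*x^2 + a₂*x + a₁) := by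
  unfold cubicDD
  ring

theorem divided_difference_coeffs {a₀ a₁ a₂ a₃ b₀ b₁ b₂ b₃ : ℂ} {r1 r2 : ℂ → ℂ}
    {h : ℂ → ℂ → ℂ} {A₀ A₁ A₂ : ℂ → ℂ}
    (hdef : ∀ x y, h x y =
      r2 x * cubicDD a₀ a₁ a₂ a₃ x y - r1 x * cubicDD b₀ b₁ b₂ b₃ x y)
    (hA : ∀ x y, h x y = A₂ x * y^2 + A₁ x * y + A₀ x) (x : ℂ) :
    A₂ x = r2 x * a₃ - r1 x * b₃ ∧
    A₁ x = r2 x * (a₃*x + a₂) - r1 x * (b₃*x + b₂) ∧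
    A₀ x = r2 x * (a₃*x^2 + a₂*x + a₁) - r1 x * (b₃*x^2 + b₂*x + b₁) :=
  quadratic_coeffs_eq_of_forall_eq two_ne_zero fun y => by
    rw [← hA, hdef, cubicDD_eq_quadratic, cubicDD_eq_quadratic]
    ring

theorem bezout_biquadratic_self_composition_general
    (a₀ a₁ a₂ a₃ b₀ b₁ b₂ b₃ : ℂ)
    (r1 r2 : ℂ → ℂ)
    (hr1 : ∀ t, r1 t = a₃*t^3 + a₂*t^2 + a₁*t + a₀)
    (hr2 : ∀ t, r2 t = b₃*t^3 + b₂*t^2 + b₁*t + b₀)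
    (h : ℂ → ℂ → ℂ)
    -- `h` is the divided difference `(r1(x)r2(y)-r2(x)r1(y))/(x-y)`,
    -- written in polynomial form:
    (hdef : ∀ x y, h x y =
      r2 x * cubicDD a₀ a₁ a₂ a₃ x y - r1 x * cubicDD b₀ b₁ b₂ b₃ x y)
    -- the coefficients of `h(x, ·)` as a quadratic in the second variable:
    (A₀ A₁ A₂ : ℂ → ℂ)
    (hA : ∀ x y, h x y = A₂ x * y^2 + A₁ x * y + A₀ x)
    -- `μ = res₃[r1, r2]`, the resultant of the two cubics:
    (μ : ℂ)
    (hμ : μ = Matrix.det !![a₃, a₂, a₁, a₀, 0, 0;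
                            0, a₃, a₂, a₁, a₀, 0;
                            0, 0, a₃, a₂, a₁, a₀;
                            b₃, b₂, b₁, b₀, 0, 0;
                            0, b₃, b₂, b₁, b₀, 0;
                            0, 0, b₃, b₂, b₁, b₀]) :
    ∀ x z : ℂ,
      Matrix.det !![A₂ x, A₁ x, A₀ x, 0;
                    0, A₂ x, A₁ x, A₀ x;
                    A₂ z, A₁ z, A₀ z, 0;
                    0, A₂ z, A₁ z, A₀ z]
        = (x - z)^2 * μ * h x z := by
  intro x z
  obtain ⟨hx₂, hx₁, hx₀⟩ := divided_difference_coeffs hdef hA x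
  obtain ⟨hz₂, hz₁, hz₀⟩ := divided_difference_coeffs hdef hA z
  rw [det_sylvester_quadratic, hx₂, hx₁, hx₀, hz₂, hz₁, hz₀, hdef x z, hμ,
    det_sylvester_cubic]
  simp only [cubicBezoutMatrix, Matrix.det_fin_three, Fin.isValue, Matrix.of_apply,
    Matrix.cons_val', Matrix.cons_val_zero, Matrix.cons_val_fin_one, Matrix.cons_val_one,
    Matrix.cons_val, neg_sub]
  rw [hr1 x, hr2 x, hr1 z, hr2 z, cubicDD, cubicDD]
  ring

/-- for cubics `r1, r2` with nonzero resultant `μ` (no common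
roots, including at infinity), the symmetric biquadratic
`h(x,y) = (r1(x)r2(y) - r2(x)r1(y))/(x-y)` satisfies
`res₂[h(x,y), h(y,z), y] = (x-z)² · μ · h(x,z)`, where `res₂` is the
determinant of the 4×4 Sylvester matrix of the two expressions regarded as
quadratics in `y`, and `μ = res₃[r1, r2]`. -/
theorem bezout_biquadratic_self_composition
    (a₀ a₁ a₂ a₃ b₀ b₁ b₂ b₃ : ℂ)
    (r1 r2 : ℂ → ℂ)
    (hr1 : ∀ t, r1 t = a₃*t^3 + a₂*t^2 + a₁*t + a₀)
    (hr2 : ∀ t, r2 t = b₃*t^3 + b₂*t^2 + b₁*t + b₀)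
    (h : ℂ → ℂ → ℂ)
    -- `h` is the divided difference `(r1(x)r2(y)-r2(x)r1(y))/(x-y)`,
    -- written in polynomial form:
    (hdef : ∀ x y, h x y =
      r2 x * cubicDD a₀ a₁ a₂ a₃ x y - r1 x * cubicDD b₀ b₁ b₂ b₃ x y)
    -- the coefficients of `h(x, ·)` as a quadratic in the second variable:
    (A₀ A₁ A₂ : ℂ → ℂ)
    (hA : ∀ x y, h x y = A₂ x * y^2 + A₁ x * y + A₀ x)
    -- `μ = res₃[r1, r2]`, the resultant of the two cubics:
    (μ : ℂ)
    (hμ : μ = Matrix.det !![a₃, a₂, a₁, a₀, 0, 0;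
                            0, a₃, a₂, a₁, a₀, 0;
                            0, 0, a₃, a₂, a₁, a₀;
                            b₃, b₂, b₁, b₀, 0, 0;
                            0, b₃, b₂, b₁, b₀, 0;
                            0, 0, b₃, b₂, b₁, b₀])
    (hμ0 : μ ≠ 0) :
    ∀ x z : ℂ,
      Matrix.det !![A₂ x, A₁ x, A₀ x, 0;
                    0, A₂ x, A₁ x, A₀ x;
                    A₂ z, A₁ z, A₀ z, 0;
                    0, A₂ z, A₁ z, A₀ z]
        = (x - z)^2 * μ * h x z :=
  bezout_biquadratic_self_composition_general a₀ a₁ a₂ a₃ b₀ b₁ b₂ b₃ r1 r2 hr1 hr2 h hdef A₀ A₁ A₂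
    hA μ hμ

end Stmt0
end

section
/- Let h(x,y) = c₀ + c₁(x+y) + c₂xy + c₃(x²+y²) + c₄xy(x+y) + c₅x²y² be a symmetric biquadratic polynomial over ℂ, and suppose x₀,x₁,x₂ ∈ ℂ are not all equal and satisfy: h(x₀,y) = (c₃+c₄x₀+c₅x₀²)(y-x₁)(y-x₂), h(x₁,y) = (c₃+c₄x₁+c₅x₁²)(y-x₂)(y-x₀), h(x₂,y) = (c₃+c₄x₂+c₅x₂²)(y-x₀)(y-x₁), as identities of polynomials in y. Then the coefficients satisfy c₁c₄ + c₃² = c₀c₅ + c₂c₃. -/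
/-!
Comparing the coefficients of `y` and `1` in `h(xᵢ, y) = a(xᵢ)(y - xⱼ)(y - xₖ)` and
using Vieta for the triple, each orbit point satisfies `Q + xᵢ P = 0` and `F + xᵢ Q = 0`,
where `P, Q, F` depend on the orbit only through its elementary symmetric functions.
Two distinct orbit points force `P = Q = F = 0`, and the constraint is the
combination `c₄ Q - c₃ P - c₅ F = 0`.
-/

section

variable {R : Type*} [CommRing R]

theorem coeffs_eq_of_forall_quadratic_eq [IsDomain R] [NeZero (2 : R)] {a b c a' b' c' : R}
    (h : ∀ y, a * y ^ 2 + b * y + c = a' * y ^ 2 + b' * y + c') : b = b' ∧ c = c' := by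
  have hc : c = c' := by simpa using h 0
  refine ⟨mul_left_cancel₀ (two_ne_zero (α := R)) ?_, hc⟩
  linear_combination h 1 - h (-1)

theorem eq_zero_of_add_mul_eq_zero_of_ne [NoZeroDivisors R] {a b x y : R}
    (hx : a + x * b = 0) (hy : a + y * b = 0) (hxy : x ≠ y) : a = 0 ∧ b = 0 := by
  have hb : b = 0 := by
    have : (x - y) * b = 0 := by linear_combination hx - hy
    exact (mul_eq_zero.mp this).resolve_left (sub_ne_zero.mpr hxy)
  exact ⟨by simpa [hb] using hx, hb⟩

theorem eq_zero_of_add_mul_eq_zero_of_not_all_eq [NoZeroDivisors R] {a b x₀ x₁ x₂ : R}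
    (hne : ¬ (x₀ = x₁ ∧ x₁ = x₂)) (h₀ : a + x₀ * b = 0) (h₁ : a + x₁ * b = 0)
    (h₂ : a + x₂ * b = 0) : a = 0 ∧ b = 0 := by
  rcases not_and_or.mp hne with h01 | h12
  · exact eq_zero_of_add_mul_eq_zero_of_ne h₀ h₁ h01
  · exact eq_zero_of_add_mul_eq_zero_of_ne h₁ h₂ h12

theorem orbit_point_relations [IsDomain R] [NeZero (2 : R)] {c₀ c₁ c₂ c₃ c₄ c₅ x u v s e p : R}
    (hs : x + u + v = s) (he : x * u + u * v + v * x = e) (hp : x * u * v = p)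
    (hx : ∀ y, c₀ + c₁*(x+y) + c₂*x*y + c₃*(x^2+y^2) + c₄*x*y*(x+y) + c₅*x^2*y^2
      = (c₃ + c₄*x + c₅*x^2) * (y - u) * (y - v)) :
    (c₁ + c₃*s - c₅*p) + x * (c₂ - c₃ + c₄*s + c₅*e) = 0 ∧
      (c₀ - c₃*e - c₄*p) + x * (c₁ + c₃*s - c₅*p) = 0 := by
  obtain ⟨hlin, hconst⟩ := coeffs_eq_of_forall_quadratic_eq
    (a := c₃ + c₄*x + c₅*x^2) (b := c₁ + c₂*x + c₄*x^2) (c := c₀ + c₁*x + c₃*x^2)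
    (a' := c₃ + c₄*x + c₅*x^2) (b' := -(c₃ + c₄*x + c₅*x^2) * (u + v))
    (c' := (c₃ + c₄*x + c₅*x^2) * (u * v)) fun y => by linear_combination hx y
  subst hs he hp
  constructor
  · linear_combination hlin
  · linear_combination hconst

end

/-- If a symmetric biquadratic `h` has a three-periodic orbit
`x₀, x₁, x₂` (not all equal), expressed by the three polynomial identities
in `y`, then the coefficients satisfy `c₁c₄ + c₃² = c₀c₅ + c₂c₃`. -/
theorem three_periodic_orbit_implies_idempotency_constraint
    (c₀ c₁ c₂ c₃ c₄ c₅ : ℂ)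
    (h : ℂ → ℂ → ℂ)
    (hdef : ∀ x y, h x y =
      c₀ + c₁*(x+y) + c₂*x*y + c₃*(x^2+y^2) + c₄*x*y*(x+y) + c₅*x^2*y^2)
    (x₀ x₁ x₂ : ℂ)
    (hne : ¬ (x₀ = x₁ ∧ x₁ = x₂))
    (h0 : ∀ y, h x₀ y = (c₃ + c₄*x₀ + c₅*x₀^2) * (y - x₁) * (y - x₂))
    (h1 : ∀ y, h x₁ y = (c₃ + c₄*x₁ + c₅*x₁^2) * (y - x₂) * (y - x₀))
    (h2 : ∀ y, h x₂ y = (c₃ + c₄*x₂ + c₅*x₂^2) * (y - x₀) * (y - x₁)) :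
    c₁*c₄ + c₃^2 = c₀*c₅ + c₂*c₃ := by
  simp only [hdef] at h0 h1 h2
  set s := x₀ + x₁ + x₂
  set e := x₀ * x₁ + x₁ * x₂ + x₂ * x₀
  set p := x₀ * x₁ * x₂
  obtain ⟨hlin₀, hconst₀⟩ := orbit_point_relations rfl rfl rfl h0
  obtain ⟨hlin₁, hconst₁⟩ := orbit_point_relations (s := s) (e := e) (p := p)
    (by ring) (by ring) (by ring) h1
  obtain ⟨hlin₂, hconst₂⟩ := orbit_point_relations (s := s) (e := e) (p := p)
    (by ring) (by ring) (by ring) h2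
  obtain ⟨hQ, hP⟩ := eq_zero_of_add_mul_eq_zero_of_not_all_eq hne hlin₀ hlin₁ hlin₂
  obtain ⟨hF, -⟩ := eq_zero_of_add_mul_eq_zero_of_not_all_eq hne hconst₀ hconst₁ hconst₂
  linear_combination c₄ * hQ - c₃ * hP - c₅ * hF
end

section
/- Suppose three triplets (x₀,x₁,x₂), (y₀,y₁,y₂), (z₀,z₁,z₂) of complex numbers, assumed pairwise disjoint as sets, satisfy h(x₀,x₁; z₀,z₁,z₂; y₀,y₁,y₂) = 0 and h(y₀,y₁; z₀,z₁,z₂; x₀,x₁,x₂) = 0, where h(x,y; a₀,a₁,a₂; b₀,b₁,b₂) := [(x-a₀)(x-a₁)(x-a₂)(y-b₀)(y-b₁)(y-b₂) - (y-a₀)(y-a₁)(y-a₂)(x-b₀)(x-b₁)(x-b₂)]/(x-y). Then the three cubics r1(x)=(x-x₀)(x-x₁)(x-x₂), r2(x)=(x-y₀)(x-y₁)(x-y₂), r3(x)=(x-z₀)(x-z₁)(x-z₂) are linearly dependent: with γ₃ = -1, γ₂ = r3(x₁)/r2(x₁), γ₁ = r3(y₁)/r1(y₁), one has γ₁r1 +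 γ₂r2 + γ₃r3 = 0 as a polynomial identity (assuming r2(x₁) ≠ 0 and r1(y₁) ≠ 0). -/
/-! Let `Q = γ₁ r1 + γ₂ r2 - r3`, a polynomial of degree at most 3. Writing `Δf(u, v)` for
divided differences, `h(x₀, x₁; z; y) = r2(x₁) · Δr3(x₀, x₁) - r3(x₁) · Δr2(x₀, x₁)`, so the first
constraint says that `γ₂ r2 - r3`, which vanishes at `x₁` by the choice of `γ₂`, also has zero
divided difference at `(x₀, x₁)`; hence `(X - x₀)(X - x₁)` divides it (as a double root when
`x₀ = x₁`), and it divides `r1` as well, so it divides `Q`. Symmetrically `(X - y₀)(X - y₁)`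
divides `Q`. The two quadratics are coprime because no `xᵢ` equals a `yⱼ`, so a quartic divides
`Q`, and `Q = 0`. -/

/-- The divided difference `(f(x)-f(y))/(x-y)` of the monic cubic with
roots `a₀,a₁,a₂`, as a polynomial expression. -/
noncomputable def cubicDD (a₀ a₁ a₂ x y : ℂ) : ℂ :=
  x^2 + x*y + y^2 - (a₀+a₁+a₂)*(x+y) + (a₀*a₁ + a₀*a₂ + a₁*a₂)

/-- The biquadratic
`h(x,y; a₀,a₁,a₂; b₀,b₁,b₂) =
 [(x-a₀)(x-a₁)(x-a₂)(y-b₀)(y-b₁)(y-b₂) - (y-a₀)(y-a₁)(y-a₂)(x-b₀)(x-b₁)(x-b₂)]/(x-y)`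
in polynomial (divided-difference) form. -/
noncomputable def hTriplet (x y a₀ a₁ a₂ b₀ b₁ b₂ : ℂ) : ℂ :=
  (x-b₀)*(x-b₁)*(x-b₂) * cubicDD a₀ a₁ a₂ x y
    - (x-a₀)*(x-a₁)*(x-a₂) * cubicDD b₀ b₁ b₂ x y

open Polynomial

section CoprimeDivisors

variable {K : Type*} [Field K]

theorem Polynomial.isCoprime_X_sub_C_mul_X_sub_C {a b c d : K}
    (hac : a ≠ c) (had : a ≠ d) (hbc : b ≠ c) (hbd : b ≠ d) :
    IsCoprime ((X - C a) * (X - C b)) ((X - C c) * (X - C d)) := by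
  have h {u v : K} (huv : u ≠ v) : IsCoprime (X - C u) (X - C v) :=
    isCoprime_X_sub_C_of_isUnit_sub (sub_ne_zero.mpr huv).isUnit
  exact ((h hac).mul_right (h had)).mul_left ((h hbc).mul_right (h hbd))

theorem Polynomial.eq_zero_of_isCoprime_of_dvd_of_natDegree_lt {p q r : K[X]}
    (hqr : IsCoprime q r) (hq : q ∣ p) (hr : r ∣ p)
    (hdeg : p.natDegree < q.natDegree + r.natDegree) : p = 0 := by
  rcases eq_or_ne q 0 with rfl | hq0
  · exact zero_dvd_iff.mp hq
  rcases eq_or_ne r 0 with rfl | hr0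
  · exact zero_dvd_iff.mp hr
  exact eq_zero_of_dvd_of_natDegree_lt (hqr.mul_dvd hq hr) (by rwa [natDegree_mul hq0 hr0])

theorem Polynomial.eq_zero_of_natDegree_le_three_of_dvd {p : K[X]} {a b c d : K}
    (hac : a ≠ c) (had : a ≠ d) (hbc : b ≠ c) (hbd : b ≠ d) (hp : p.natDegree ≤ 3)
    (hab : (X - C a) * (X - C b) ∣ p) (hcd : (X - C c) * (X - C d) ∣ p) : p = 0 := by
  refine eq_zero_of_isCoprime_of_dvd_of_natDegree_lt
    (isCoprime_X_sub_C_mul_X_sub_C hac had hbc hbd) hab hcd ?_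
  rw [natDegree_mul (X_sub_C_ne_zero a) (X_sub_C_ne_zero b),
    natDegree_mul (X_sub_C_ne_zero c) (X_sub_C_ne_zero d)]
  simp only [natDegree_X_sub_C]
  omega

end CoprimeDivisors

noncomputable def cubicWithRoots (a₀ a₁ a₂ : ℂ) : ℂ[X] :=
  (X - C a₀) * (X - C a₁) * (X - C a₂)

noncomputable def cubicDDPoly (a₀ a₁ a₂ y : ℂ) : ℂ[X] :=
  X ^ 2 + C y * X + C (y ^ 2) - C (a₀ + a₁ + a₂) * (X + C y) + C (a₀ * a₁ + a₀ * a₂ + a₁ * a₂)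

section Cubics

variable (a₀ a₁ a₂ b₀ b₁ b₂ x y : ℂ)

@[simp]
theorem eval_cubicWithRoots :
    (cubicWithRoots a₀ a₁ a₂).eval x = (x - a₀) * (x - a₁) * (x - a₂) := by
  simp [cubicWithRoots]

@[simp]
theorem eval_cubicDDPoly : (cubicDDPoly a₀ a₁ a₂ y).eval x = cubicDD a₀ a₁ a₂ x y := by
  simp [cubicDDPoly, cubicDD]
  ring

theorem natDegree_cubicWithRoots : (cubicWithRoots a₀ a₁ a₂).natDegree = 3 := by
  unfold cubicWithRoots
  compute_degree!

theorem X_sub_C_mul_X_sub_C_dvd_cubicWithRoots :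
    (X - C a₀) * (X - C a₁) ∣ cubicWithRoots a₀ a₁ a₂ :=
  dvd_mul_right _ _

theorem cubicWithRoots_eq_C_add_X_sub_C_mul :
    cubicWithRoots a₀ a₁ a₂ =
      C ((cubicWithRoots a₀ a₁ a₂).eval y) + (X - C y) * cubicDDPoly a₀ a₁ a₂ y :=
  Polynomial.funext fun x => by simp [cubicDD]; ring

theorem hTriplet_eq :
    hTriplet x y a₀ a₁ a₂ b₀ b₁ b₂ =
      (cubicWithRoots b₀ b₁ b₂).eval y * cubicDD a₀ a₁ a₂ x y
        - (cubicWithRoots a₀ a₁ a₂).eval y * cubicDD b₀ b₁ b₂ x y := by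
  simp only [hTriplet, cubicDD, eval_cubicWithRoots]
  ring

variable {a₀ a₁ a₂ b₀ b₁ b₂ x y} in
theorem X_sub_C_mul_X_sub_C_dvd_of_hTriplet_eq_zero
    (hh : hTriplet x y a₀ a₁ a₂ b₀ b₁ b₂ = 0) (hb : (cubicWithRoots b₀ b₁ b₂).eval y ≠ 0) :
    (X - C x) * (X - C y) ∣
      C ((cubicWithRoots a₀ a₁ a₂).eval y / (cubicWithRoots b₀ b₁ b₂).eval y)
        * cubicWithRoots b₀ b₁ b₂ - cubicWithRoots a₀ a₁ a₂ := by
  set γ := (cubicWithRoots a₀ a₁ a₂).eval y / (cubicWithRoots b₀ b₁ b₂).eval y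
  have hγ : γ * (cubicWithRoots b₀ b₁ b₂).eval y = (cubicWithRoots a₀ a₁ a₂).eval y :=
    div_mul_cancel₀ _ hb
  have hfactor : C γ * cubicWithRoots b₀ b₁ b₂ - cubicWithRoots a₀ a₁ a₂ =
      (C γ * cubicDDPoly b₀ b₁ b₂ y - cubicDDPoly a₀ a₁ a₂ y) * (X - C y) := by
    rw [cubicWithRoots_eq_C_add_X_sub_C_mul a₀ a₁ a₂ y,
      cubicWithRoots_eq_C_add_X_sub_C_mul b₀ b₁ b₂ y, ← hγ, C_mul]
    ring
  have hroot : (C γ * cubicDDPoly b₀ b₁ b₂ y - cubicDDPoly a₀ a₁ a₂ y).IsRoot x := by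
    rw [hTriplet_eq] at hh
    refine mul_right_cancel₀ hb ?_
    simp only [eval_sub, eval_mul, eval_C, eval_cubicDDPoly, zero_mul]
    linear_combination cubicDD b₀ b₁ b₂ x y * hγ - hh
  rw [hfactor]
  exact mul_dvd_mul_right (dvd_iff_isRoot.mpr hroot) _

end Cubics

theorem three_orbit_constraint_linear_dependence_general
    (x₀ x₁ x₂ y₀ y₁ y₂ z₀ z₁ z₂ : ℂ)
    (hdisj₁ : ({x₀, x₁, x₂} : Set ℂ) ∩ {y₀, y₁, y₂} = ∅)
    (r1 r2 r3 : ℂ → ℂ)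
    (hr1 : ∀ x, r1 x = (x-x₀)*(x-x₁)*(x-x₂))
    (hr2 : ∀ x, r2 x = (x-y₀)*(x-y₁)*(x-y₂))
    (hr3 : ∀ x, r3 x = (x-z₀)*(x-z₁)*(x-z₂))
    (hcon₁ : hTriplet x₀ x₁ z₀ z₁ z₂ y₀ y₁ y₂ = 0)
    (hcon₂ : hTriplet y₀ y₁ z₀ z₁ z₂ x₀ x₁ x₂ = 0)
    (hr2x₁ : r2 x₁ ≠ 0) (hr1y₁ : r1 y₁ ≠ 0) :
    ∀ x, (r3 y₁ / r1 y₁) * r1 x + (r3 x₁ / r2 x₁) * r2 x + (-1) * r3 x = 0 := by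
  obtain rfl : r1 = fun x => (cubicWithRoots x₀ x₁ x₂).eval x := funext fun x => by simp [hr1]
  obtain rfl : r2 = fun x => (cubicWithRoots y₀ y₁ y₂).eval x := funext fun x => by simp [hr2]
  obtain rfl : r3 = fun x => (cubicWithRoots z₀ z₁ z₂).eval x := funext fun x => by simp [hr3]
  have hxy := Set.disjoint_iff_inter_eq_empty.mpr hdisj₁
  have hx₀y₀ : x₀ ≠ y₀ := hxy.ne_of_mem (by simp) (by simp)
  have hx₀y₁ : x₀ ≠ y₁ := hxy.ne_of_mem (by simp) (by simp)
  have hx₁y₀ : x₁ ≠ y₀ := hxy.ne_of_mem (by simp) (by simp)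
  have hx₁y₁ : x₁ ≠ y₁ := hxy.ne_of_mem (by simp) (by simp)
  set R1 := cubicWithRoots x₀ x₁ x₂
  set R2 := cubicWithRoots y₀ y₁ y₂
  set R3 := cubicWithRoots z₀ z₁ z₂
  set γ₁ := R3.eval y₁ / R1.eval y₁
  set γ₂ := R3.eval x₁ / R2.eval x₁
  have hQ : C γ₁ * R1 + C γ₂ * R2 - R3 = 0 := by
    refine eq_zero_of_natDegree_le_three_of_dvd hx₀y₀ hx₀y₁ hx₁y₀ hx₁y₁ ?_ ?_ ?_
    · exact natDegree_sub_le_of_le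
        (natDegree_add_le_of_degree_le
          ((natDegree_C_mul_le _ _).trans (natDegree_cubicWithRoots _ _ _).le)
          ((natDegree_C_mul_le _ _).trans (natDegree_cubicWithRoots _ _ _).le))
        (natDegree_cubicWithRoots _ _ _).le
    · rw [add_sub_assoc]
      exact dvd_add (dvd_mul_of_dvd_right (X_sub_C_mul_X_sub_C_dvd_cubicWithRoots ..) _)
        (X_sub_C_mul_X_sub_C_dvd_of_hTriplet_eq_zero hcon₁ hr2x₁)
    · rw [add_sub_right_comm, add_comm]
      exact dvd_add (dvd_mul_of_dvd_right (X_sub_C_mul_X_sub_C_dvd_cubicWithRoots ..) _)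
        (X_sub_C_mul_X_sub_C_dvd_of_hTriplet_eq_zero hcon₂ hr1y₁)
  intro x
  simpa [sub_eq_add_neg] using congrArg (eval x) hQ

/-- the three-orbit constraint forces linear dependence of
the three monic cubics whose roots are the three triplets. -/
theorem three_orbit_constraint_linear_dependence
    (x₀ x₁ x₂ y₀ y₁ y₂ z₀ z₁ z₂ : ℂ)
    (hdisj₁ : ({x₀, x₁, x₂} : Set ℂ) ∩ {y₀, y₁, y₂} = ∅)
    (hdisj₂ : ({x₀, x₁, x₂} : Set ℂ) ∩ {z₀, z₁, z₂} = ∅)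
    (hdisj₃ : ({y₀, y₁, y₂} : Set ℂ) ∩ {z₀, z₁, z₂} = ∅)
    (r1 r2 r3 : ℂ → ℂ)
    (hr1 : ∀ x, r1 x = (x-x₀)*(x-x₁)*(x-x₂))
    (hr2 : ∀ x, r2 x = (x-y₀)*(x-y₁)*(x-y₂))
    (hr3 : ∀ x, r3 x = (x-z₀)*(x-z₁)*(x-z₂))
    (hcon₁ : hTriplet x₀ x₁ z₀ z₁ z₂ y₀ y₁ y₂ = 0)
    (hcon₂ : hTriplet y₀ y₁ z₀ z₁ z₂ x₀ x₁ x₂ = 0)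
    (hr2x₁ : r2 x₁ ≠ 0) (hr1y₁ : r1 y₁ ≠ 0) :
    ∀ x, (r3 y₁ / r1 y₁) * r1 x + (r3 x₁ / r2 x₁) * r2 x + (-1) * r3 x = 0 :=
  three_orbit_constraint_linear_dependence_general x₀ x₁ x₂ y₀ y₁ y₂ z₀ z₁ z₂ hdisj₁ r1 r2 r3 hr1
    hr2 hr3 hcon₁ hcon₂ hr2x₁ hr1y₁
end

section
/- Define on pairs (a,b) ∈ ℂ× × ℂ× the binary operation (a,b)·(c,d) = (ac, bd), and define φ(a,b) = (a(1-b)/(a-b), (1-b)/(a-b)) for a ≠ b. Let (x₀,y₀) = φ(a,b) and (x₁,y₁) = φ(c,d) and (y₂,x₂) = φ(ac,bd) (assuming all denominators nonzero). Then (1-x₀)(1-x₁)(1-x₂) = (1-y₀)(1-y₁)(1-y₂) and x₀x₁x₂ = y₀y₁y₂. -/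
/-!
The point `(x, y) = φ(a, b)` is the solution of `x = a * y` and `1 - x = b * (1 - y)`.
So `x₀ x₁` and `(1 - x₀)(1 - x₁)` are `y₀ y₁` and `(1 - y₀)(1 - y₁)` scaled by `ac` and `bd`,
and the pair `(y₂, x₂) = φ(ac, bd)` undoes exactly these scalings.
-/

section ThreeOrbit

variable {K : Type*} [Field K]

theorem one_sub_mul_div_sub_eq {a b : K} (hab : a ≠ b) :
    1 - a * (1 - b) / (a - b) = b * (1 - (1 - b) / (a - b)) := by
  have : a - b ≠ 0 := sub_ne_zero.mpr hab
  field_simp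
  ring

theorem three_orbit_of_eq_mul {a b c d x₀ y₀ x₁ y₁ x₂ y₂ : K}
    (h₀ : x₀ = a * y₀) (h₀' : 1 - x₀ = b * (1 - y₀))
    (h₁ : x₁ = c * y₁) (h₁' : 1 - x₁ = d * (1 - y₁))
    (h₂ : y₂ = a * c * x₂) (h₂' : 1 - y₂ = b * d * (1 - x₂)) :
    (1 - x₀) * (1 - x₁) * (1 - x₂) = (1 - y₀) * (1 - y₁) * (1 - y₂) ∧
      x₀ * x₁ * x₂ = y₀ * y₁ * y₂ := by
  rw [h₀', h₁', h₂', h₀, h₁, h₂]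
  constructor <;> ring

end ThreeOrbit

theorem phi_conjugates_multiplication_to_F1_binop_general
    (a b c d : ℂ)
    (hab : a ≠ b) (hcd : c ≠ d) (hacbd : a*c ≠ b*d)
    (x₀ y₀ x₁ y₁ x₂ y₂ : ℂ)
    (hx₀ : x₀ = a*(1-b)/(a-b)) (hy₀ : y₀ = (1-b)/(a-b))
    (hx₁ : x₁ = c*(1-d)/(c-d)) (hy₁ : y₁ = (1-d)/(c-d))
    (hy₂ : y₂ = (a*c)*(1-b*d)/(a*c-b*d)) (hx₂ : x₂ = (1-b*d)/(a*c-b*d)) :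
    (1-x₀)*(1-x₁)*(1-x₂) = (1-y₀)*(1-y₁)*(1-y₂) ∧
      x₀*x₁*x₂ = y₀*y₁*y₂ := by
  subst hx₀ hy₀ hx₁ hy₁ hy₂ hx₂
  exact three_orbit_of_eq_mul (mul_div_assoc _ _ _) (one_sub_mul_div_sub_eq hab)
    (mul_div_assoc _ _ _) (one_sub_mul_div_sub_eq hcd)
    (mul_div_assoc _ _ _) (one_sub_mul_div_sub_eq hacbd)

/-- the substitution `φ(a,b) = (a(1-b)/(a-b), (1-b)/(a-b))`
conjugates componentwise multiplication on `ℂ× × ℂ×` to the binary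
operation defined by the three-orbit constraint with third orbit `(0,1,∞)`. -/
theorem phi_conjugates_multiplication_to_F1_binop
    (a b c d : ℂ)
    (ha : a ≠ 0) (hb : b ≠ 0) (hc : c ≠ 0) (hd : d ≠ 0)
    (hab : a ≠ b) (hcd : c ≠ d) (hacbd : a*c ≠ b*d)
    (x₀ y₀ x₁ y₁ x₂ y₂ : ℂ)
    (hx₀ : x₀ = a*(1-b)/(a-b)) (hy₀ : y₀ = (1-b)/(a-b))
    (hx₁ : x₁ = c*(1-d)/(c-d)) (hy₁ : y₁ = (1-d)/(c-d))
    (hy₂ : y₂ = (a*c)*(1-b*d)/(a*c-b*d)) (hx₂ : x₂ = (1-b*d)/(a*c-b*d)) :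
    (1-x₀)*(1-x₁)*(1-x₂) = (1-y₀)*(1-y₁)*(1-y₂) ∧
      x₀*x₁*x₂ = y₀*y₁*y₂ :=
  phi_conjugates_multiplication_to_F1_binop_general a b c d hab hcd hacbd x₀ y₀ x₁ y₁ x₂ y₂ hx₀ hy₀
    hx₁ hy₁ hy₂ hx₂
end

section
/- Define the binary operation on pairs of complex numbers: (x₀,y₀)·(x₁,y₁) := (y₂,x₂) where y₂ and x₂ are the unique solutions of the system x₀x₁x₂ = y₀y₁y₂ and x₀+x₁+x₂ = y₀+y₁+y₂ (i.e., x₂ and y₂ are determined rationally: subtracting gives x₂ - y₂ = (y₀+y₁) - (x₀+x₁) and x₂/y₂ determined from the product relation, assuming nondegeneracy). Then this operation is commutative and associative wherever defined. -/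
/-!
Write `σ(x, y) = y - x`. Away from degenerate points, `p · q` is the unique pair whose
`σ` is `σ p + σ q` and whose ratio `y / x` is the product of the ratios of `p` and `q`.
So `σ` and the ratio identify the operation with the group `(ℂ, +) × (ℂ ˣ, ·)`, which is
commutative and associative. To avoid dividing by `x`, the ratio is kept in homogeneous
coordinates `[a : b]`: both bracketings of `p · q · r` are the pair with difference
`σ p + σ q + σ r` and ratio `[p.1 q.1 r.1 : p.2 q.2 r.2]`.
-/

/-- The binary operation `(x₀,y₀)·(x₁,y₁) := (y₂,x₂)` defined by the system
`x₀x₁x₂ = y₀y₁y₂`, `x₀+x₁+x₂ = y₀+y₁+y₂` (third orbit `(0,∞,∞)`): solving the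
system rationally gives, with `s = (y₀+y₁)-(x₀+x₁)` and `δ = y₀y₁-x₀x₁`,
`y₂ = s·x₀x₁/δ` and `x₂ = s·y₀y₁/δ`. -/
noncomputable def binopF2 (p q : ℂ × ℂ) : ℂ × ℂ :=
  ((((q.2 + p.2) - (q.1 + p.1)) * p.1 * q.1) / (p.2 * q.2 - p.1 * q.1),
   (((q.2 + p.2) - (q.1 + p.1)) * p.2 * q.2) / (p.2 * q.2 - p.1 * q.1))

section ofDiffRatio

variable {K : Type*} [Field K]

/-- The pair `(x, y)` with `y - x = s` and `[x : y] = [a : b]`: the homogeneous form of the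
paper's `(s, ρ) ↦ (s / (ρ - 1), s ρ / (ρ - 1))`. -/
def ofDiffRatio (s a b : K) : K × K :=
  (s * a / (b - a), s * b / (b - a))

theorem ofDiffRatio_snd_sub_fst (s : K) {a b : K} (hab : b - a ≠ 0) :
    (ofDiffRatio s a b).2 - (ofDiffRatio s a b).1 = s := by
  rw [ofDiffRatio, ← sub_div, ← mul_sub, mul_div_cancel_right₀ s hab]

theorem ofDiffRatio_mul_mul (s : K) {c : K} (hc : c ≠ 0) (a b : K) :
    ofDiffRatio s (c * a) (c * b) = ofDiffRatio s a b := by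
  simp only [ofDiffRatio, ← mul_sub, mul_left_comm s c, mul_div_mul_left _ _ hc]

end ofDiffRatio

theorem binopF2_eq_ofDiffRatio (p q : ℂ × ℂ) :
    binopF2 p q = ofDiffRatio ((p.2 - p.1) + (q.2 - q.1)) (p.1 * q.1) (p.2 * q.2) := by
  simp only [binopF2, ofDiffRatio]
  congr 1 <;> ring

theorem binopF2_comm (p q : ℂ × ℂ) : binopF2 p q = binopF2 q p := by
  rw [binopF2_eq_ofDiffRatio, binopF2_eq_ofDiffRatio, add_comm, mul_comm p.1, mul_comm p.2]

theorem binopF2_ofDiffRatio (s : ℂ) {a b : ℂ} (r : ℂ × ℂ) (hab : b - a ≠ 0)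
    (h : (ofDiffRatio s a b).2 * r.2 - (ofDiffRatio s a b).1 * r.1 ≠ 0) :
    binopF2 (ofDiffRatio s a b) r = ofDiffRatio (s + (r.2 - r.1)) (a * r.1) (b * r.2) := by
  -- `h` reads `s / (b - a) * (b * r.2 - a * r.1) ≠ 0`
  have hc : s / (b - a) ≠ 0 := by
    refine left_ne_zero_of_mul (a := s / (b - a)) (b := b * r.2 - a * r.1) ?_
    convert h using 1
    simp only [ofDiffRatio]
    ring
  rw [binopF2_eq_ofDiffRatio, ofDiffRatio_snd_sub_fst s hab,
    ← ofDiffRatio_mul_mul (s + (r.2 - r.1)) hc (a * r.1) (b * r.2)]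
  congr 1 <;> simp only [ofDiffRatio] <;> ring

/-- `binopF2` is commutative, and associative wherever all the
denominators involved are nonzero. -/
theorem binopF2_comm_and_assoc :
    (∀ p q : ℂ × ℂ, binopF2 p q = binopF2 q p) ∧
    (∀ p q r : ℂ × ℂ,
      p.2 * q.2 - p.1 * q.1 ≠ 0 →
      q.2 * r.2 - q.1 * r.1 ≠ 0 →
      (binopF2 p q).2 * r.2 - (binopF2 p q).1 * r.1 ≠ 0 →
      p.2 * (binopF2 q r).2 - p.1 * (binopF2 q r).1 ≠ 0 →
      binopF2 (binopF2 p q) r = binopF2 p (binopF2 q r)) := by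
  refine ⟨binopF2_comm, fun p q r hpq hqr hpq_r hp_qr => ?_⟩
  rw [binopF2_eq_ofDiffRatio p q] at hpq_r ⊢
  rw [binopF2_eq_ofDiffRatio q r, mul_comm p.2, mul_comm p.1] at hp_qr
  rw [binopF2_comm p, binopF2_eq_ofDiffRatio q r, binopF2_ofDiffRatio _ _ hpq hpq_r,
    binopF2_ofDiffRatio _ _ hqr hp_qr]
  congr 1 <;> ring
end

section
/- Define ψ(a,b) = (a/b + b, a/b - b) for b ≠ 0. Then for all a,b,c,d ∈ ℂ with b,d,(b+d) ≠ 0, setting (x₀,y₀) = ψ(a,b), (x₁,y₁) = ψ(c,d), (y₂,x₂) = ψ(a+c, b+d), one has x₀+x₁+x₂ = y₀+y₁+y₂ and x₀²+x₁²+x₂² = y₀²+y₁²+y₂². -/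
/-!
For `(x, y) = ψ(a, b)` both `x - y = 2b` and `x² - y² = 4a` are linear in `(a, b)`, and swapping
the third pair negates them, so the power-sum differences are `2(b + d - (b + d)) = 0` and
`4(a + c - (a + c)) = 0`.
-/

theorem div_add_sq_sub_div_sub_sq {K : Type*} [Field K] (a : K) {b : K} (hb : b ≠ 0) :
    (a / b + b) ^ 2 - (a / b - b) ^ 2 = 4 * a := by
  field_simp
  ring

/-- the substitution `ψ(a,b) = (a/b + b, a/b - b)` linearizes the
binary operation defined by the three-orbit constraint with third orbit
`(∞,∞,∞)` (equality of the first two power sums). -/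
theorem psi_linearizes_F4_binop
    (a b c d : ℂ) (hb : b ≠ 0) (hd : d ≠ 0) (hbd : b + d ≠ 0)
    (x₀ y₀ x₁ y₁ x₂ y₂ : ℂ)
    (hx₀ : x₀ = a/b + b) (hy₀ : y₀ = a/b - b)
    (hx₁ : x₁ = c/d + d) (hy₁ : y₁ = c/d - d)
    (hy₂ : y₂ = (a+c)/(b+d) + (b+d)) (hx₂ : x₂ = (a+c)/(b+d) - (b+d)) :
    x₀ + x₁ + x₂ = y₀ + y₁ + y₂ ∧
      x₀^2 + x₁^2 + x₂^2 = y₀^2 + y₁^2 + y₂^2 := by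
  subst hx₀ hy₀ hx₁ hy₁ hx₂ hy₂
  refine ⟨by ring, ?_⟩
  linear_combination div_add_sq_sub_div_sub_sq a hb + div_add_sq_sub_div_sub_sq c hd
    - div_add_sq_sub_div_sub_sq (a + c) hbd
end

section
/- In the group with presentation on generators σ₁,…,σ_m, ω (m ≥ 3) and relations σᵢ² = ω² = (σᵢω)⁴ = 1 for all i, (σᵢσⱼ)² = (σᵢωσⱼω)³ = 1 for all i ≠ j, and ((σᵢσⱼω)²σₖω)² = 1 for all pairwise distinct i,j,k, the elements πᵢⱼ := (ωσᵢσⱼ)³ (for i ≠ j) are involutions satisfying πᵢⱼσᵢ = σⱼπᵢⱼ, and πᵢⱼ commutes with σₖ for any k ∉ {i,j}. -/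
/-!
Write `x = ωσᵢω` and `y = ωσⱼω`. The relations `(σω)⁴ = (σᵢσⱼ)² = 1` make `σᵢ, x, y, σⱼ` a
cycle of commuting involutions, and `(σⱼωσᵢω)³ = 1` is the braid relation between `σⱼ` and `x`
(hence, conjugating by `ω`, between `y` and `σᵢ`). So `⟨σᵢ, y⟩` and `⟨σⱼ, x⟩` are commuting
copies of `S₃` swapped by `ω`, and `πᵢⱼ = g h ω` with `g = yσᵢy` and `h = xσⱼx = ωgω`. This
gives `πᵢⱼ² = 1`, and conjugation by `πᵢⱼ` carries `σᵢ` to `x` (by `ω`), then to `σⱼ` (by `h`,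
a transposition of `⟨σⱼ, x⟩`), where `g` fixes it. For `k ∉ {i, j}`, the last relation says
that `X = (σᵢσⱼω)²σₖω` equals `X⁻¹`, and `πᵢⱼσₖ = ωXωσᵢσⱼ`, `σₖπᵢⱼ = ωX⁻¹ωσᵢσⱼ`.
-/

section Involution

variable {G : Type*} [Group G] {u v w : G}

theorem inv_eq_self_of_sq_eq_one (hu : u ^ 2 = 1) : u⁻¹ = u :=
  inv_eq_of_mul_eq_one_right (by rwa [← sq])

theorem mul_mul_cancel_left_of_sq_eq_one (hu : u ^ 2 = 1) (v : G) : u * (u * v) = v := by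
  rw [← mul_assoc, ← sq, hu, one_mul]

theorem commute_of_mul_sq_eq_one (hu : u ^ 2 = 1) (hv : v ^ 2 = 1) (huv : (u * v) ^ 2 = 1) :
    Commute u v := by
  have h := inv_eq_self_of_sq_eq_one huv
  rw [mul_inv_rev, inv_eq_self_of_sq_eq_one hu, inv_eq_self_of_sq_eq_one hv] at h
  exact h.symm

theorem mul_mul_eq_of_mul_pow_three_eq_one (hu : u ^ 2 = 1) (hv : v ^ 2 = 1)
    (huv : (u * v) ^ 3 = 1) : u * v * u = v * u * v := by
  have h : u * v * u * (v * u * v) = 1 := by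
    simpa only [pow_succ, pow_zero, one_mul, mul_assoc] using huv
  rw [eq_inv_of_mul_eq_one_left h, mul_inv_rev, mul_inv_rev, inv_eq_self_of_sq_eq_one hu,
    inv_eq_self_of_sq_eq_one hv, mul_assoc]

theorem mul_mul_eq_mulAut_conj (hw : w ^ 2 = 1) (u : G) : w * u * w = MulAut.conj w u := by
  rw [MulAut.conj_apply, inv_eq_self_of_sq_eq_one hw]

theorem conj_mul_of_sq_eq_one (hw : w ^ 2 = 1) (u v : G) :
    w * (u * v) * w = w * u * w * (w * v * w) := by
  simp only [mul_mul_eq_mulAut_conj hw, map_mul]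

theorem conj_conj_of_sq_eq_one (hw : w ^ 2 = 1) (u : G) : w * (w * u * w) * w = u := by
  simp only [mul_assoc, mul_mul_cancel_left_of_sq_eq_one hw, ← sq, hw, mul_one]

theorem semiconjBy_conj_of_sq_eq_one (hw : w ^ 2 = 1) (u : G) : SemiconjBy w u (w * u * w) := by
  rw [SemiconjBy, mul_assoc (w * u), ← sq, hw, mul_one]

theorem sq_conj_eq_one (hw : w ^ 2 = 1) (hu : u ^ 2 = 1) : (w * u * w) ^ 2 = 1 := by
  rw [mul_mul_eq_mulAut_conj hw, ← map_pow, hu, map_one]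

theorem Commute.conj_of_sq_eq_one (hw : w ^ 2 = 1) (h : Commute u v) :
    Commute (w * u * w) (w * v * w) := by
  simpa only [mul_mul_eq_mulAut_conj hw] using h.map (MulAut.conj w)

theorem semiconjBy_mul_mul_of_braid (hu : u ^ 2 = 1) (hv : v ^ 2 = 1)
    (h : u * v * u = v * u * v) : SemiconjBy (u * v * u) u v := by
  rw [SemiconjBy, mul_assoc (u * v), ← sq, hu, mul_one, h]
  simp only [mul_assoc, mul_mul_cancel_left_of_sq_eq_one hv]

theorem sq_mul_mul_eq_one_of_conj_eq {g h : G} (hw : w ^ 2 = 1) (hg : g ^ 2 = 1)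
    (hh : h ^ 2 = 1) (hgh : w * g * w = h) : (g * h * w) ^ 2 = 1 := by
  have hhg : w * h * w = g := by rw [← hgh, conj_conj_of_sq_eq_one hw]
  calc (g * h * w) ^ 2 = g * h * (w * g * w) * (w * h * w) := by
        simp only [sq, mul_assoc, mul_mul_cancel_left_of_sq_eq_one hw]
    _ = 1 := by rw [hgh, hhg, mul_assoc g, ← sq h, hh, mul_one, ← sq, hg]

end Involution

section RowTransposition

variable {G : Type*} [Group G] {a b c e w : G}

theorem commute_conj_of_mul_pow_four_eq_one (ha : a ^ 2 = 1) (hw : w ^ 2 = 1)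
    (haw : (a * w) ^ 4 = 1) : Commute a (w * a * w) := by
  refine commute_of_mul_sq_eq_one ha (sq_conj_eq_one hw ha) ?_
  rwa [show a * (w * a * w) = (a * w) ^ 2 by simp only [sq, mul_assoc], ← pow_mul]

theorem mul_conj_mul_eq_conj_mul_mul_of_mul_pow_three_eq_one (ha : a ^ 2 = 1) (hb : b ^ 2 = 1)
    (hw : w ^ 2 = 1) (hbwaw : (b * w * a * w) ^ 3 = 1) :
    b * (w * a * w) * b = w * a * w * b * (w * a * w) :=
  mul_mul_eq_of_mul_pow_three_eq_one hb (sq_conj_eq_one hw ha)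
    (by simpa only [mul_assoc] using hbwaw)

theorem mul_mul_pow_three_eq (ha : a ^ 2 = 1) (hb : b ^ 2 = 1) (hw : w ^ 2 = 1)
    (hab : Commute a b) (haw : (a * w) ^ 4 = 1) (hbw : (b * w) ^ 4 = 1) :
    (w * a * b) ^ 3 = w * b * w * a * (w * b * w) * (w * a * w * b * (w * a * w)) * w := by
  have hax := commute_conj_of_mul_pow_four_eq_one ha hw haw
  have hby := commute_conj_of_mul_pow_four_eq_one hb hw hbw
  have hxy := hab.conj_of_sq_eq_one hw
  set x := w * a * w with hx
  set y := w * b * w with hy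
  have hwab : w * a * b = x * y * w := by
    rw [hx, hy, ← conj_mul_of_sq_eq_one hw, mul_assoc _ w w, ← sq, hw, mul_one, mul_assoc]
  have hwxy : w * (x * y) = a * b * w := by
    rw [semiconjBy_conj_of_sq_eq_one hw (x * y), conj_mul_of_sq_eq_one hw, hx, hy,
      conj_conj_of_sq_eq_one hw, conj_conj_of_sq_eq_one hw]
  have hx_ya : Commute x (y * a) := hxy.mul_right hax.symm
  have hy_xbx : Commute y (x * b * x) := (hxy.symm.mul_right hby.symm).mul_right hxy.symm
  calc (w * a * b) ^ 3 = x * y * (w * (x * y)) * w * (x * y) * w := by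
        rw [hwab]; simp only [pow_succ, pow_zero, one_mul, mul_assoc]
    _ = x * (y * a) * (b * x) * y * w := by
        rw [hwxy]; simp only [mul_assoc, mul_mul_cancel_left_of_sq_eq_one hw]
    _ = y * a * (x * b * x * y) * w := by rw [hx_ya.eq]; simp only [mul_assoc]
    _ = y * a * y * (x * b * x) * w := by rw [← hy_xbx.eq]; simp only [mul_assoc]

theorem sq_pow_three_eq_one (ha : a ^ 2 = 1) (hb : b ^ 2 = 1) (hw : w ^ 2 = 1)
    (hab : Commute a b) (haw : (a * w) ^ 4 = 1) (hbw : (b * w) ^ 4 = 1)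
    (hbwaw : (b * w * a * w) ^ 3 = 1) : ((w * a * b) ^ 3) ^ 2 = 1 := by
  rw [mul_mul_pow_three_eq ha hb hw hab haw hbw]
  refine sq_mul_mul_eq_one_of_conj_eq hw (sq_conj_eq_one (sq_conj_eq_one hw hb) ha)
    (sq_conj_eq_one (sq_conj_eq_one hw ha) hb) ?_
  rw [conj_mul_of_sq_eq_one hw, conj_mul_of_sq_eq_one hw, conj_conj_of_sq_eq_one hw,
    mul_conj_mul_eq_conj_mul_mul_of_mul_pow_three_eq_one ha hb hw hbwaw]

theorem pow_three_mul_eq_mul_pow_three (ha : a ^ 2 = 1) (hb : b ^ 2 = 1) (hw : w ^ 2 = 1)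
    (hab : Commute a b) (haw : (a * w) ^ 4 = 1) (hbw : (b * w) ^ 4 = 1)
    (hbwaw : (b * w * a * w) ^ 3 = 1) : (w * a * b) ^ 3 * a = b * (w * a * b) ^ 3 := by
  have hby := commute_conj_of_mul_pow_four_eq_one hb hw hbw
  have hbx := mul_conj_mul_eq_conj_mul_mul_of_mul_pow_three_eq_one ha hb hw hbwaw
  rw [mul_mul_pow_three_eq ha hb hw hab haw hbw]
  set x := w * a * w
  set y := w * b * w
  have hg : Commute (y * a * y) b := (hby.symm.mul_left hab).mul_left hby.symm
  have hh : SemiconjBy (x * b * x) x b :=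
    semiconjBy_mul_mul_of_braid (sq_conj_eq_one hw ha) hb hbx.symm
  exact (SemiconjBy.mul_left hg hh).mul_left (semiconjBy_conj_of_sq_eq_one hw a)

theorem commute_mul_pow_three_of_sq_mul_mul_sq_eq_one (he : e ^ 2 = 1) (hw : w ^ 2 = 1)
    (hc : c ^ 2 = 1) (hce : Commute c e) (h : ((e * w) ^ 2 * c * w) ^ 2 = 1) :
    Commute ((w * e) ^ 3) c := by
  have hX : (e * w) ^ 2 * c * w = w * c * (w * e) ^ 2 :=
    calc (e * w) ^ 2 * c * w = ((e * w) ^ 2 * c * w)⁻¹ := (inv_eq_self_of_sq_eq_one h).symm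
      _ = w * c * (w * e) ^ 2 := by
        simp only [mul_inv_rev, ← inv_pow, inv_eq_self_of_sq_eq_one hw,
          inv_eq_self_of_sq_eq_one hc, inv_eq_self_of_sq_eq_one he, mul_assoc]
  calc (w * e) ^ 3 * c = w * ((e * w) ^ 2 * c * w) * (w * e) := by
        simp only [pow_succ, pow_zero, one_mul, mul_assoc, mul_mul_cancel_left_of_sq_eq_one hw,
          ← hce.eq]
    _ = w * (w * c * (w * e) ^ 2) * (w * e) := by rw [hX]
    _ = c * (w * e) ^ 3 := by
        simp only [pow_succ, pow_zero, one_mul, mul_assoc, mul_mul_cancel_left_of_sq_eq_one hw]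

end RowTransposition

theorem vertex_map_group_row_transpositions_general
    (G : Type*) [Group G] (m : ℕ)
    (σ : Fin m → G) (ω : G)
    (h1 : ∀ i, (σ i)^2 = 1)
    (h2 : ω^2 = 1)
    (h3 : ∀ i, (σ i * ω)^4 = 1)
    (h4 : ∀ i j, i ≠ j → (σ i * σ j)^2 = 1)
    (h5 : ∀ i j, i ≠ j → (σ i * ω * σ j * ω)^3 = 1)
    (h6 : ∀ i j k, i ≠ j → j ≠ k → i ≠ k →
      ((σ i * σ j * ω)^2 * σ k * ω)^2 = 1) :
    ∀ i j, i ≠ j →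
      ((ω * σ i * σ j)^3)^2 = 1 ∧
      (ω * σ i * σ j)^3 * σ i = σ j * (ω * σ i * σ j)^3 ∧
      (∀ k, k ≠ i → k ≠ j →
        (ω * σ i * σ j)^3 * σ k = σ k * (ω * σ i * σ j)^3) := by
  have hcomm : ∀ i j, i ≠ j → Commute (σ i) (σ j) := fun i j hij =>
    commute_of_mul_sq_eq_one (h1 i) (h1 j) (h4 i j hij)
  intro i j hij
  refine ⟨sq_pow_three_eq_one (h1 i) (h1 j) h2 (hcomm i j hij) (h3 i) (h3 j) (h5 j i hij.symm),
    pow_three_mul_eq_mul_pow_three (h1 i) (h1 j) h2 (hcomm i j hij) (h3 i) (h3 j) (h5 j i hij.symm),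
    fun k hki hkj => ?_⟩
  have hπ := commute_mul_pow_three_of_sq_mul_mul_sq_eq_one (h4 i j hij) h2 (h1 k)
    ((hcomm k i hki).mul_right (hcomm k j hkj)) (h6 i j k hij (Ne.symm hkj) (Ne.symm hki))
  simpa only [mul_assoc] using hπ.eq

/-- in the complete vertex-map group, i.e. for any group
elements `σ₁,…,σₘ, ω` satisfying the defining relations, the elements
`πᵢⱼ = (ωσᵢσⱼ)³` are involutions intertwining `σᵢ` with `σⱼ` and commuting
with the `σₖ` for `k ∉ {i,j}`. -/
theorem vertex_map_group_row_transpositions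
    (G : Type*) [Group G] (m : ℕ) (hm : 3 ≤ m)
    (σ : Fin m → G) (ω : G)
    (h1 : ∀ i, (σ i)^2 = 1)
    (h2 : ω^2 = 1)
    (h3 : ∀ i, (σ i * ω)^4 = 1)
    (h4 : ∀ i j, i ≠ j → (σ i * σ j)^2 = 1)
    (h5 : ∀ i j, i ≠ j → (σ i * ω * σ j * ω)^3 = 1)
    (h6 : ∀ i j k, i ≠ j → j ≠ k → i ≠ k →
      ((σ i * σ j * ω)^2 * σ k * ω)^2 = 1) :
    ∀ i j, i ≠ j →
      ((ω * σ i * σ j)^3)^2 = 1 ∧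
      (ω * σ i * σ j)^3 * σ i = σ j * (ω * σ i * σ j)^3 ∧
      (∀ k, k ≠ i → k ≠ j →
        (ω * σ i * σ j)^3 * σ k = σ k * (ω * σ i * σ j)^3) :=
  vertex_map_group_row_transpositions_general G m σ ω h1 h2 h3 h4 h5 h6
end

section
/- Let h(x,y) be a symmetric biquadratic polynomial over ℂ with coefficients c₀,…,c₅ (h(x,y)=c₀+c₁(x+y)+c₂xy+c₃(x²+y²)+c₄xy(x+y)+c₅x²y²) satisfying c₁c₄+c₃² = c₀c₅+c₂c₃, and let w,z ∈ ℂ be such that η² := (w-z)h(w,z) ≠ 0. Define r₁(x) = (w-x)h(w,x)/η and r₂(x) = (z-x)h(z,x)/η. Then r₁,r₂ are polynomials of degree at most 3 in x and h(x,y)·(x-y) = r₁(x)r₂(y) - r₂(x)r₁(y) for all x,y. -/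
/-!
Write `B(x, y) = (x - y) h(x, y)`. The three-term sum
`B(w,z)B(x,y) + B(w,y)B(z,x) + B(w,x)B(y,z)` is the idempotency defect
`c₀c₅ + c₂c₃ - c₁c₄ - c₃²` times the Vandermonde product of `w, x, y, z`, so it vanishes
for idempotent `h`. Dividing the resulting relation by `η² = B(w, z)` gives the Bezout form,
and `r₁, r₂` are the cubics `η⁻¹ B(w, X)`, `η⁻¹ B(z, X)`.
-/

open Polynomial

namespace SymmBiquadratic

section CommRing

variable {R : Type*} [CommRing R] (c₀ c₁ c₂ c₃ c₄ c₅ : R)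

def eval (x y : R) : R :=
  c₀ + c₁*(x+y) + c₂*x*y + c₃*(x^2+y^2) + c₄*x*y*(x+y) + c₅*x^2*y^2

def bezoutian (x y : R) : R := (x - y) * eval c₀ c₁ c₂ c₃ c₄ c₅ x y

local notation "B" => bezoutian c₀ c₁ c₂ c₃ c₄ c₅

theorem bezoutian_swap (x y : R) : B y x = - B x y := by
  simp only [bezoutian, eval]
  ring

theorem bezoutian_three_term (w x y z : R) :
    B w z * B x y + B w y * B z x + B w x * B y z
      = (c₀*c₅ + c₂*c₃ - c₁*c₄ - c₃^2) * ((w-x)*(w-y)*(w-z)*(x-y)*(x-z)*(y-z)) := by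
  simp only [bezoutian, eval]
  ring

theorem bezoutian_pluecker (hc : c₁*c₄ + c₃^2 = c₀*c₅ + c₂*c₃) (w x y z : R) :
    B w z * B x y = B w x * B z y - B z x * B w y := by
  rw [bezoutian_swap c₀ c₁ c₂ c₃ c₄ c₅ y z]
  linear_combination bezoutian_three_term c₀ c₁ c₂ c₃ c₄ c₅ w x y z
    - ((w-x)*(w-y)*(w-z)*(x-y)*(x-z)*(y-z)) * hc

noncomputable def bezoutianPoly (w : R) : R[X] :=
  (C w - X) *
    (C (c₀ + c₁*w + c₃*w^2) + C (c₁ + c₂*w + c₄*w^2) * X + C (c₃ + c₄*w + c₅*w^2) * X^2)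

theorem eval_bezoutianPoly (w x : R) : (bezoutianPoly c₀ c₁ c₂ c₃ c₄ c₅ w).eval x = B w x := by
  simp only [bezoutianPoly, bezoutian, eval, eval_mul, eval_add, eval_sub, eval_C, eval_X,
    eval_pow]
  ring

theorem degree_bezoutianPoly_le (w : R) : (bezoutianPoly c₀ c₁ c₂ c₃ c₄ c₅ w).degree ≤ 3 := by
  unfold bezoutianPoly
  compute_degree

end CommRing

section Field

variable {K : Type*} [Field K] {c₀ c₁ c₂ c₃ c₄ c₅ : K}

local notation "B" => bezoutian c₀ c₁ c₂ c₃ c₄ c₅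

theorem bezoutian_eq_div_mul_sub (hc : c₁*c₄ + c₃^2 = c₀*c₅ + c₂*c₃) {w z η : K}
    (hη : η^2 = B w z) (hη0 : η ≠ 0) (x y : K) :
    B x y = B w x / η * (B z y / η) - B z x / η * (B w y / η) := by
  rw [div_mul_div_comm, div_mul_div_comm, div_sub_div_same, eq_div_iff (mul_ne_zero hη0 hη0)]
  linear_combination bezoutian_pluecker c₀ c₁ c₂ c₃ c₄ c₅ hc w x y z + B x y * hη

end Field

end SymmBiquadratic

open SymmBiquadratic

/-- an idempotent symmetric biquadratic `h` admits the
Cayley–Bezout divided-difference form: with `η² = (w-z)h(w,z) ≠ 0`,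
`r₁(x) = (w-x)h(w,x)/η` and `r₂(x) = (z-x)h(z,x)/η` are polynomials of
degree at most 3 and `h(x,y)(x-y) = r₁(x)r₂(y) - r₂(x)r₁(y)`. -/
theorem idempotent_biquadratic_bezout_form
    (c₀ c₁ c₂ c₃ c₄ c₅ : ℂ)
    (h : ℂ → ℂ → ℂ)
    (hdef : ∀ x y, h x y =
      c₀ + c₁*(x+y) + c₂*x*y + c₃*(x^2+y^2) + c₄*x*y*(x+y) + c₅*x^2*y^2)
    (hc : c₁*c₄ + c₃^2 = c₀*c₅ + c₂*c₃)
    (w z η : ℂ) (hη : η^2 = (w - z) * h w z) (hη0 : η ≠ 0)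
    (r₁ r₂ : ℂ → ℂ)
    (hr₁ : ∀ x, r₁ x = (w - x) * h w x / η)
    (hr₂ : ∀ x, r₂ x = (z - x) * h z x / η) :
    (∃ p q : Polynomial ℂ, p.degree ≤ 3 ∧ q.degree ≤ 3 ∧
      (∀ x, p.eval x = r₁ x) ∧ (∀ x, q.eval x = r₂ x)) ∧
    (∀ x y, h x y * (x - y) = r₁ x * r₂ y - r₂ x * r₁ y) := by
  obtain rfl : h = SymmBiquadratic.eval c₀ c₁ c₂ c₃ c₄ c₅ := funext₂ hdef
  have hdeg (u : ℂ) : (C η⁻¹ * bezoutianPoly c₀ c₁ c₂ c₃ c₄ c₅ u).degree ≤ 3 := by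
    rw [degree_C_mul (inv_ne_zero hη0)]
    exact degree_bezoutianPoly_le c₀ c₁ c₂ c₃ c₄ c₅ u
  have heval (u x : ℂ) : (C η⁻¹ * bezoutianPoly c₀ c₁ c₂ c₃ c₄ c₅ u).eval x
      = bezoutian c₀ c₁ c₂ c₃ c₄ c₅ u x / η := by
    rw [eval_mul, eval_C, eval_bezoutianPoly, inv_mul_eq_div]
  refine ⟨⟨_, _, hdeg w, hdeg z, fun x ↦ (heval w x).trans (hr₁ x).symm,
    fun x ↦ (heval z x).trans (hr₂ x).symm⟩, fun x y ↦ ?_⟩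
  rw [mul_comm, hr₁, hr₁, hr₂, hr₂]
  exact bezoutian_eq_div_mul_sub hc hη hη0 x y
end
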